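/- There is a positive constant C depending only on L₁ and L₂ such that for any functions f, g, h on Ω = M×(−1,1) for which the right-hand side is finite, ∫_M (∫_{−1}^1 f(x,y,z) dz)(∫_{−1}^1 g(x,y,z) h(x,y,z) dz) dxdy ≤ C ‖f‖₂^{1/2}(‖f‖₂^{1/2} + ‖∇_H f‖₂^{1/2}) ‖g‖₂ ‖h‖₂^{1/2}(‖h‖₂^{1/2} + ‖∇_H h‖₂^{1/2}). -/

import Mathlib

open MeasureTheory Real Set

noncomputable section

/-- The horizontal Euclidean plane `ℝ²`. -/
abbrev E2 := EuclideanSpace ℝ (Fin 2)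

section Derivatives

variable {E : Type*} [NormedAddCommGroup E] [NormedSpace ℝ E]

/-- Partial derivative in the `x` direction. -/
def dX (f : ℝ → ℝ → ℝ → E) : ℝ → ℝ → ℝ → E := fun x y z => deriv (fun s => f s y z) x

/-- Partial derivative in the `y` direction. -/
def dY (f : ℝ → ℝ → ℝ → E) : ℝ → ℝ → ℝ → E := fun x y z => deriv (fun s => f x s z) y

/-- Partial derivative in the `z` direction. -/
def dZ (f : ℝ → ℝ → ℝ → E) : ℝ → ℝ → ℝ → E := fun x y z => deriv (fun s => f x y s) z

/-- Time derivative of a time-dependent field. -/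
def dT (f : ℝ → ℝ → ℝ → ℝ → E) : ℝ → ℝ → ℝ → ℝ → E := fun t x y z => deriv (fun s => f s x y z) t

/-- Spatial partial derivative indexed by `i : Fin 3`. -/
def pd3 (i : Fin 3) (f : ℝ → ℝ → ℝ → E) : ℝ → ℝ → ℝ → E :=
  if i = 0 then dX f else if i = 1 then dY f else dZ f

/-- Iterated spatial partial derivative along a list of directions. -/
def mderiv : List (Fin 3) → (ℝ → ℝ → ℝ → E) → (ℝ → ℝ → ℝ → E)
  | [], f => f
  | i :: l, f => pd3 i (mderiv l f)

/-- Full three-dimensional Laplacian. -/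
def lap (f : ℝ → ℝ → ℝ → E) : ℝ → ℝ → ℝ → E :=
  fun x y z => dX (dX f) x y z + dY (dY f) x y z + dZ (dZ f) x y z

end Derivatives

section Norms

variable {E : Type*} [NormedAddCommGroup E] [NormedSpace ℝ E]

/-- Iterated integral over `Ω = (0,L₁)×(0,L₂)×(−1,1)`. -/
def intΩ (L₁ L₂ : ℝ) (g : ℝ → ℝ → ℝ → ℝ) : ℝ :=
  ∫ x in Ioo 0 L₁, ∫ y in Ioo 0 L₂, ∫ z in Ioo (-1 : ℝ) 1, g x y z

/-- Square of the `L²(Ω)` norm. -/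
def L2Sq (L₁ L₂ : ℝ) (f : ℝ → ℝ → ℝ → E) : ℝ :=
  intΩ L₁ L₂ fun x y z => ‖f x y z‖ ^ 2

/-- Square of the `L²(Ω)` norm of the full gradient. -/
def GradL2Sq (L₁ L₂ : ℝ) (f : ℝ → ℝ → ℝ → E) : ℝ :=
  L2Sq L₁ L₂ (dX f) + L2Sq L₁ L₂ (dY f) + L2Sq L₁ L₂ (dZ f)

/-- Square of the `H^k(Ω)` norm (sum over all iterated partial derivatives of order `≤ k`). -/
def HkSq (k : ℕ) (L₁ L₂ : ℝ) (f : ℝ → ℝ → ℝ → E) : ℝ :=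
  ∑ j ∈ Finset.range (k + 1), ∑ α : Fin j → Fin 3, L2Sq L₁ L₂ (mderiv (List.ofFn α) f)

/-- Fourth power of the `L⁴(Ω)` norm. -/
def L4Pow (L₁ L₂ : ℝ) (f : ℝ → ℝ → ℝ → E) : ℝ :=
  intΩ L₁ L₂ fun x y z => ‖f x y z‖ ^ 4

/-- Membership in `H^k(Ω)`: all iterated partial derivatives of order `≤ k` are
square integrable over `Ω`. -/
def MemHk (k : ℕ) (L₁ L₂ : ℝ) (f : ℝ → ℝ → ℝ → E) : Prop :=
  ∀ l : List (Fin 3), l.length ≤ k →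
    IntegrableOn (fun q : ℝ × ℝ × ℝ => ‖mderiv l f q.1 q.2.1 q.2.2‖ ^ 2)
      (Ioo 0 L₁ ×ˢ Ioo 0 L₂ ×ˢ Ioo (-1 : ℝ) 1)

end Norms

section PEM

/-- Horizontal divergence of a horizontal vector field. -/
def divH (v : ℝ → ℝ → ℝ → E2) : ℝ → ℝ → ℝ → ℝ :=
  fun x y z => dX (fun a b c => v a b c 0) x y z + dY (fun a b c => v a b c 1) x y z

/-- The vertical component determined from the horizontal one by incompressibility:
`w(x,y,z) = −∫₀^z ∇_H·v(x,y,ξ) dξ`. -/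
def vert (v : ℝ → ℝ → ℝ → E2) : ℝ → ℝ → ℝ → ℝ :=
  fun x y z => -∫ ξ in (0 : ℝ)..z, divH v x y ξ

/-- `i`-th component of a horizontal vector field. -/
def compH (i : Fin 2) (v : ℝ → ℝ → ℝ → E2) : ℝ → ℝ → ℝ → ℝ :=
  fun x y z => v x y z i

/-- Advection term `(v·∇)f` with horizontal part `vH` and vertical part `v3`. -/
def adv {E : Type*} [NormedAddCommGroup E] [NormedSpace ℝ E]
    (vH : ℝ → ℝ → ℝ → E2) (v3 : ℝ → ℝ → ℝ → ℝ) (f : ℝ → ℝ → ℝ → E) : ℝ → ℝ → ℝ → E :=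
  fun x y z => vH x y z 0 • dX f x y z + vH x y z 1 • dY f x y z + v3 x y z • dZ f x y z

/-- Horizontal partial derivative indexed by `i : Fin 2` (component of `∇_H`). -/
def pdH (i : Fin 2) (f : ℝ → ℝ → ℝ → ℝ) : ℝ → ℝ → ℝ → ℝ :=
  if i = 0 then dX f else dY f

/-- A (global, classical) strong solution of the primitive equations with magnetic field (PEM)
on `Ω = (0,L₁)×(0,L₂)×(−1,1)`, periodic in `x,y,z` with periods `L₁,L₂,2`, with the horizontal
velocity `u`, magnetic field `b` even in `z` and the pressure `p` odd in `z`. -/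
structure IsStrongSolPEM (L₁ L₂ : ℝ) (u b : ℝ → ℝ → ℝ → ℝ → E2)
    (p : ℝ → ℝ → ℝ → ℝ → ℝ) : Prop where
  smooth_u : ContDiff ℝ 2 fun q : ℝ × ℝ × ℝ × ℝ => u q.1 q.2.1 q.2.2.1 q.2.2.2
  smooth_b : ContDiff ℝ 2 fun q : ℝ × ℝ × ℝ × ℝ => b q.1 q.2.1 q.2.2.1 q.2.2.2
  smooth_p : ContDiff ℝ 2 fun q : ℝ × ℝ × ℝ × ℝ => p q.1 q.2.1 q.2.2.1 q.2.2.2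
  periodic_u : ∀ t x y z, u t (x + L₁) y z = u t x y z ∧ u t x (y + L₂) z = u t x y z ∧
    u t x y (z + 2) = u t x y z
  periodic_b : ∀ t x y z, b t (x + L₁) y z = b t x y z ∧ b t x (y + L₂) z = b t x y z ∧
    b t x y (z + 2) = b t x y z
  periodic_p : ∀ t x y z, p t (x + L₁) y z = p t x y z ∧ p t x (y + L₂) z = p t x y z ∧
    p t x y (z + 2) = p t x y z
  even_u : ∀ t x y z, u t x y (-z) = u t x y z
  even_b : ∀ t x y z, b t x y (-z) = b t x y z
  odd_p : ∀ t x y z, p t x y (-z) = -p t x y z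
  mom : ∀ t > (0 : ℝ), ∀ x y z, ∀ i : Fin 2,
    dT u t x y z i + adv (u t) (vert (u t)) (compH i (u t)) x y z
      - lap (compH i (u t)) x y z
      - adv (b t) (vert (b t)) (compH i (b t)) x y z
      + pdH i (p t) x y z = 0
  press_z : ∀ t > (0 : ℝ), ∀ x y z, dZ (p t) x y z = 0
  mag : ∀ t > (0 : ℝ), ∀ x y z, ∀ i : Fin 2,
    dT b t x y z i + adv (u t) (vert (u t)) (compH i (b t)) x y z
      - lap (compH i (b t)) x y z
      - adv (b t) (vert (b t)) (compH i (u t)) x y z = 0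
  div_u : ∀ t > (0 : ℝ), ∀ x y z, divH (u t) x y z + dZ (vert (u t)) x y z = 0
  div_b : ∀ t > (0 : ℝ), ∀ x y z, divH (b t) x y z + dZ (vert (b t)) x y z = 0

end PEM

/-- Square of the `L²(Ω)` norm of the horizontal gradient. -/
def GradHL2Sq (L₁ L₂ : ℝ) (f : ℝ → ℝ → ℝ → ℝ) : ℝ :=
  L2Sq L₁ L₂ (dX f) + L2Sq L₁ L₂ (dY f)

namespace ALady

lemma sqrt_add_le' (a b : ℝ) (ha : 0 ≤ a) (hb : 0 ≤ b) :
    Real.sqrt (a + b) ≤ Real.sqrt a + Real.sqrt b := by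
  have h1 := Real.sq_sqrt ha
  have h2 := Real.sq_sqrt hb
  have h3 := Real.sqrt_nonneg a
  have h4 := Real.sqrt_nonneg b
  have h : a + b ≤ (Real.sqrt a + Real.sqrt b) ^ 2 := by nlinarith [mul_nonneg h3 h4]
  calc Real.sqrt (a + b) ≤ Real.sqrt ((Real.sqrt a + Real.sqrt b) ^ 2) := Real.sqrt_le_sqrt h
  _ = _ := Real.sqrt_sq (by positivity)

lemma intOn {a b : ℝ} {u : ℝ → ℝ} (hu : Continuous u) :
    IntegrableOn u (Ioo a b) := (hu.integrableOn_Icc).mono_set Ioo_subset_Icc_self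

lemma memL2 {a b : ℝ} {u : ℝ → ℝ} (hu : Continuous u) :
    MemLp u 2 (volume.restrict (Ioo a b)) := by
  obtain ⟨C, hC⟩ := (isCompact_Icc (a := a) (b := b)).exists_bound_of_continuousOn
    hu.continuousOn
  haveI : IsFiniteMeasure (volume.restrict (Ioo a b)) :=
    ⟨by simp only [Measure.restrict_apply_univ, Real.volume_Ioo]; exact ENNReal.ofReal_lt_top⟩
  refine MemLp.of_bound hu.aestronglyMeasurable C ?_
  refine (ae_restrict_iff' measurableSet_Ioo).2 (ae_of_all _ fun x hx => ?_)
  exact hC x (Ioo_subset_Icc_self hx)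

/-- Cauchy–Schwarz on a bounded interval for continuous functions. -/
lemma cs {a b : ℝ} {u v : ℝ → ℝ} (hu : Continuous u) (hv : Continuous v) :
    ∫ x in Ioo a b, u x * v x ≤
      Real.sqrt (∫ x in Ioo a b, u x ^ 2) * Real.sqrt (∫ x in Ioo a b, v x ^ 2) := by
  have hpq : Real.HolderConjugate 2 2 := by rw [Real.holderConjugate_iff]; norm_num
  have h1 : ∫ x in Ioo a b, u x * v x ≤ ∫ x in Ioo a b, ‖u x‖ * ‖v x‖ := by
    refine setIntegral_mono_on (intOn (hu.mul hv)) (intOn (hu.norm.mul hv.norm))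
      measurableSet_Ioo fun x _ => ?_
    calc u x * v x ≤ |u x * v x| := le_abs_self _
    _ = ‖u x‖ * ‖v x‖ := by rw [abs_mul]; rfl
  have h2 := MeasureTheory.integral_mul_norm_le_Lp_mul_Lq (μ := volume.restrict (Ioo a b))
    hpq (by simpa using memL2 hu) (by simpa using memL2 hv)
  have e1 : ∀ w : ℝ → ℝ, (∫ x in Ioo a b, ‖w x‖ ^ (2:ℝ)) = ∫ x in Ioo a b, w x ^ 2 := by
    intro w
    refine integral_congr_ae (ae_of_all _ fun x => ?_)
    show ‖w x‖ ^ (2:ℝ) = w x ^ 2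
    rw [show (2:ℝ) = ((2:ℕ):ℝ) by norm_num, Real.rpow_natCast]
    simp [Real.norm_eq_abs, sq_abs]
  rw [e1, e1] at h2
  have e2 : ∀ r : ℝ, 0 ≤ r → r ^ ((1:ℝ)/2) = Real.sqrt r := fun r hr => by
    rw [Real.sqrt_eq_rpow]
  have hnn : ∀ w : ℝ → ℝ, 0 ≤ ∫ x in Ioo a b, w x ^ 2 := fun w =>
    integral_nonneg fun x => sq_nonneg _
  rw [e2 _ (hnn u), e2 _ (hnn v)] at h2
  exact h1.trans h2

/-- Continuity of a parametric integral over a bounded interval. -/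
lemma contParam {X : Type*} [TopologicalSpace X] [FirstCountableTopology X]
    [LocallyCompactSpace X] {w : X → ℝ → ℝ}
    (hw : Continuous fun p : X × ℝ => w p.1 p.2) (a b : ℝ) :
    Continuous fun x => ∫ t in Ioo a b, w x t := by
  have h : (fun x => ∫ t in Ioo a b, w x t) = fun x => ∫ t in Icc a b, w x t := by
    funext x; rw [integral_Icc_eq_integral_Ioo]
  rw [h]
  exact continuous_parametric_integral_of_continuous hw isCompact_Icc

/-- Fubini swap on a product of bounded intervals for continuous integrands. -/
lemma swapInt {a b c d : ℝ} {w : ℝ → ℝ → ℝ}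
    (hw : Continuous fun p : ℝ × ℝ => w p.1 p.2) :
    ∫ x in Ioo a b, ∫ y in Ioo c d, w x y = ∫ y in Ioo c d, ∫ x in Ioo a b, w x y := by
  apply integral_integral_swap
  rw [Measure.prod_restrict]
  have h1 : IntegrableOn (fun p : ℝ × ℝ => w p.1 p.2) (Icc a b ×ˢ Icc c d)
      (volume.prod volume) := by
    rw [← Measure.volume_eq_prod]
    exact hw.continuousOn.integrableOn_compact (isCompact_Icc.prod isCompact_Icc)
  exact h1.mono_set (prod_mono Ioo_subset_Icc_self Ioo_subset_Icc_self)

/-- 1D mean-value + FTC bound on an interval. -/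
lemma mean_bound {L : ℝ} (hL : 0 < L) {φ : ℝ → ℝ} (hφ : ContDiff ℝ 1 φ) {x : ℝ}
    (hx : x ∈ Ioo 0 L) :
    φ x ≤ (1 / L) * (∫ s in Ioo 0 L, φ s) + ∫ s in Ioo 0 L, |deriv φ s| := by
  have hder : Continuous (deriv φ) := hφ.continuous_deriv le_rfl
  have hdint : IntegrableOn (fun s => |deriv φ s|) (Ioo 0 L) := intOn hder.abs
  have key : ∀ s ∈ Ioo 0 L, φ x - ∫ t in Ioo 0 L, |deriv φ t| ≤ φ s := by
    intro s hs
    have hftc : ∫ t in s..x, deriv φ t = φ x - φ s :=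
      intervalIntegral.integral_deriv_eq_sub
        (fun t _ => (hφ.differentiable one_ne_zero).differentiableAt)
        (hder.intervalIntegrable s x)
    have h1 : φ x - φ s ≤ |∫ t in s..x, deriv φ t| := by rw [hftc] at *; exact le_abs_self _
    have h2 : |∫ t in s..x, deriv φ t| ≤ ∫ t in Set.uIoc s x, |deriv φ t| := by
      simpa [Real.norm_eq_abs] using
        intervalIntegral.norm_integral_le_integral_norm_uIoc (f := deriv φ) (a := s) (b := x)
    have h3 : ∫ t in Set.uIoc s x, |deriv φ t| ≤ ∫ t in Ioo 0 L, |deriv φ t| := by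
      apply setIntegral_mono_set hdint (ae_of_all _ fun t => abs_nonneg _)
      have hss : Set.uIoc s x ⊆ Ioo 0 L := by
        rw [Set.uIoc]
        intro t ht
        exact ⟨lt_of_lt_of_le (lt_min hs.1 hx.1) ht.1.le,
          lt_of_le_of_lt ht.2 (max_lt hs.2 hx.2)⟩
      exact HasSubset.Subset.eventuallyLE hss
    linarith [h1.trans (h2.trans h3)]
  have hconst : IntegrableOn (fun _ : ℝ => φ x - ∫ t in Ioo 0 L, |deriv φ t|) (Ioo 0 L) := by
    refine integrableOn_const ?_
    rw [Real.volume_Ioo]; exact ENNReal.ofReal_lt_top.ne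
  have hint := setIntegral_mono_on hconst (intOn hφ.continuous) measurableSet_Ioo key
  rw [setIntegral_const, measureReal_def, Real.volume_Ioo, sub_zero, ENNReal.toReal_ofReal hL.le,
    smul_eq_mul] at hint
  have h6 := mul_le_mul_of_nonneg_left hint (one_div_pos.2 hL).le
  rw [← mul_assoc, one_div_mul_cancel hL.ne', one_mul] at h6
  linarith [h6]

section PD

variable {f : ℝ → ℝ → ℝ → ℝ}

lemma hasDerivX (hf : ContDiff ℝ 1 (fun q : ℝ × ℝ × ℝ => f q.1 q.2.1 q.2.2)) (x y z : ℝ) :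
    HasDerivAt (fun s => f s y z)
      (fderiv ℝ (fun q : ℝ × ℝ × ℝ => f q.1 q.2.1 q.2.2) (x, y, z) (1, 0, 0)) x := by
  have h1 : HasFDerivAt (fun q : ℝ × ℝ × ℝ => f q.1 q.2.1 q.2.2)
      (fderiv ℝ (fun q : ℝ × ℝ × ℝ => f q.1 q.2.1 q.2.2) (x, y, z)) (x, y, z) :=
    ((hf.differentiable one_ne_zero) (x, y, z)).hasFDerivAt
  have h2 : HasDerivAt (fun s : ℝ => ((s, y, z) : ℝ × ℝ × ℝ)) (1, 0, 0) x :=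
    (hasDerivAt_id x).prodMk (hasDerivAt_const x ((y, z) : ℝ × ℝ))
  exact h1.comp_hasDerivAt x h2

lemma hasDerivY (hf : ContDiff ℝ 1 (fun q : ℝ × ℝ × ℝ => f q.1 q.2.1 q.2.2)) (x y z : ℝ) :
    HasDerivAt (fun s => f x s z)
      (fderiv ℝ (fun q : ℝ × ℝ × ℝ => f q.1 q.2.1 q.2.2) (x, y, z) (0, 1, 0)) y := by
  have h1 : HasFDerivAt (fun q : ℝ × ℝ × ℝ => f q.1 q.2.1 q.2.2)
      (fderiv ℝ (fun q : ℝ × ℝ × ℝ => f q.1 q.2.1 q.2.2) (x, y, z)) (x, y, z) :=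
    ((hf.differentiable one_ne_zero) (x, y, z)).hasFDerivAt
  have h2 : HasDerivAt (fun s : ℝ => ((x, s, z) : ℝ × ℝ × ℝ)) (0, 1, 0) y :=
    (hasDerivAt_const y x).prodMk ((hasDerivAt_id y).prodMk (hasDerivAt_const y z))
  exact h1.comp_hasDerivAt y h2

lemma dX_eq (hf : ContDiff ℝ 1 (fun q : ℝ × ℝ × ℝ => f q.1 q.2.1 q.2.2)) (x y z : ℝ) :
    dX f x y z = fderiv ℝ (fun q : ℝ × ℝ × ℝ => f q.1 q.2.1 q.2.2) (x, y, z) (1, 0, 0) :=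
  (hasDerivX hf x y z).deriv

lemma dY_eq (hf : ContDiff ℝ 1 (fun q : ℝ × ℝ × ℝ => f q.1 q.2.1 q.2.2)) (x y z : ℝ) :
    dY f x y z = fderiv ℝ (fun q : ℝ × ℝ × ℝ => f q.1 q.2.1 q.2.2) (x, y, z) (0, 1, 0) :=
  (hasDerivY hf x y z).deriv

lemma contDX (hf : ContDiff ℝ 1 (fun q : ℝ × ℝ × ℝ => f q.1 q.2.1 q.2.2)) :
    Continuous fun q : ℝ × ℝ × ℝ => dX f q.1 q.2.1 q.2.2 := by
  have h : (fun q : ℝ × ℝ × ℝ => dX f q.1 q.2.1 q.2.2)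
      = fun q : ℝ × ℝ × ℝ => fderiv ℝ (fun q : ℝ × ℝ × ℝ => f q.1 q.2.1 q.2.2) q (1, 0, 0) := by
    funext q
    exact dX_eq hf q.1 q.2.1 q.2.2
  rw [h]
  exact (hf.continuous_fderiv one_ne_zero).clm_apply continuous_const

lemma contDY (hf : ContDiff ℝ 1 (fun q : ℝ × ℝ × ℝ => f q.1 q.2.1 q.2.2)) :
    Continuous fun q : ℝ × ℝ × ℝ => dY f q.1 q.2.1 q.2.2 := by
  have h : (fun q : ℝ × ℝ × ℝ => dY f q.1 q.2.1 q.2.2)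
      = fun q : ℝ × ℝ × ℝ => fderiv ℝ (fun q : ℝ × ℝ × ℝ => f q.1 q.2.1 q.2.2) q (0, 1, 0) := by
    funext q
    exact dY_eq hf q.1 q.2.1 q.2.2
  rw [h]
  exact (hf.continuous_fderiv one_ne_zero).clm_apply continuous_const

/-- The partial map in `x` of the square is C¹ with explicit derivative. -/
lemma sq_partial_x (hf : ContDiff ℝ 1 (fun q : ℝ × ℝ × ℝ => f q.1 q.2.1 q.2.2)) (y z : ℝ) :
    ContDiff ℝ 1 (fun s => f s y z ^ 2) ∧
      ∀ s, deriv (fun s => f s y z ^ 2) s = 2 * f s y z * dX f s y z := by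
  constructor
  · have hline : ContDiff ℝ 1 (fun s : ℝ => ((s, y, z) : ℝ × ℝ × ℝ)) :=
      contDiff_id.prodMk contDiff_const
    exact (hf.comp hline).pow 2
  · intro s
    have h := (hasDerivX hf s y z).pow 2
    rw [← dX_eq hf s y z] at h
    simpa [mul_comm, mul_assoc, pow_one, Pi.pow_def] using h.deriv

lemma sq_partial_y (hf : ContDiff ℝ 1 (fun q : ℝ × ℝ × ℝ => f q.1 q.2.1 q.2.2)) (x z : ℝ) :
    ContDiff ℝ 1 (fun t => f x t z ^ 2) ∧
      ∀ t, deriv (fun t => f x t z ^ 2) t = 2 * f x t z * dY f x t z := by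
  constructor
  · have hline : ContDiff ℝ 1 (fun t : ℝ => ((x, t, z) : ℝ × ℝ × ℝ)) :=
      contDiff_const.prodMk (contDiff_id.prodMk contDiff_const)
    exact (hf.comp hline).pow 2
  · intro t
    have h := (hasDerivY hf x t z).pow 2
    rw [← dY_eq hf x t z] at h
    simpa [mul_comm, mul_assoc, pow_one, Pi.pow_def] using h.deriv

end PD

/-- Triple iterated Cauchy–Schwarz over `Ω`. -/
lemma cs3 {L₁ L₂ : ℝ} {F G : ℝ → ℝ → ℝ → ℝ}
    (hF : Continuous fun q : ℝ × ℝ × ℝ => F q.1 q.2.1 q.2.2)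
    (hG : Continuous fun q : ℝ × ℝ × ℝ => G q.1 q.2.1 q.2.2) :
    (∫ x in Ioo (0:ℝ) L₁, ∫ y in Ioo (0:ℝ) L₂, ∫ z in Ioo (-1:ℝ) 1,
        |F x y z| * |G x y z|)
      ≤ Real.sqrt (∫ x in Ioo (0:ℝ) L₁, ∫ y in Ioo (0:ℝ) L₂, ∫ z in Ioo (-1:ℝ) 1,
            F x y z ^ 2)
        * Real.sqrt (∫ x in Ioo (0:ℝ) L₁, ∫ y in Ioo (0:ℝ) L₂, ∫ z in Ioo (-1:ℝ) 1,
            G x y z ^ 2) := by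
  have hrea : Continuous fun q : (ℝ × ℝ) × ℝ => ((q.1.1, q.1.2, q.2) : ℝ × ℝ × ℝ) := by
    fun_prop
  have hFj : Continuous fun q : (ℝ × ℝ) × ℝ => F q.1.1 q.1.2 q.2 := hF.comp hrea
  have hGj : Continuous fun q : (ℝ × ℝ) × ℝ => G q.1.1 q.1.2 q.2 := hG.comp hrea
  have hsl : ∀ x : ℝ, Continuous fun y : ℝ => ((x, y) : ℝ × ℝ) := fun x =>
    continuous_const.prodMk continuous_id
  have hFz : ∀ x y : ℝ, Continuous fun z => F x y z := fun x y =>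
    hFj.comp ((continuous_const : Continuous fun _ : ℝ => ((x, y) : ℝ × ℝ)).prodMk
      continuous_id)
  have hGz : ∀ x y : ℝ, Continuous fun z => G x y z := fun x y =>
    hGj.comp ((continuous_const : Continuous fun _ : ℝ => ((x, y) : ℝ × ℝ)).prodMk
      continuous_id)
  -- parametric continuity of the z-integrals
  have cPF : Continuous fun p : ℝ × ℝ => ∫ z in Ioo (-1:ℝ) 1, F p.1 p.2 z ^ 2 :=
    contParam (w := fun (p : ℝ × ℝ) z => F p.1 p.2 z ^ 2) (hFj.pow 2) (-1) 1
  have cPG : Continuous fun p : ℝ × ℝ => ∫ z in Ioo (-1:ℝ) 1, G p.1 p.2 z ^ 2 :=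
    contParam (w := fun (p : ℝ × ℝ) z => G p.1 p.2 z ^ 2) (hGj.pow 2) (-1) 1
  have cAbs : Continuous fun p : ℝ × ℝ => ∫ z in Ioo (-1:ℝ) 1, |F p.1 p.2 z| * |G p.1 p.2 z| :=
    contParam (w := fun (p : ℝ × ℝ) z => |F p.1 p.2 z| * |G p.1 p.2 z|) (hFj.abs.mul hGj.abs) (-1) 1
  -- z-level Cauchy–Schwarz
  have hz : ∀ x y : ℝ, (∫ z in Ioo (-1:ℝ) 1, |F x y z| * |G x y z|)
      ≤ Real.sqrt (∫ z in Ioo (-1:ℝ) 1, F x y z ^ 2) *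
        Real.sqrt (∫ z in Ioo (-1:ℝ) 1, G x y z ^ 2) := by
    intro x y
    have h1 := cs (a := (-1:ℝ)) (b := 1) (hFz x y).abs (hGz x y).abs
    simpa [sq_abs] using h1
  -- y-level
  have hy : ∀ x : ℝ, (∫ y in Ioo (0:ℝ) L₂, ∫ z in Ioo (-1:ℝ) 1, |F x y z| * |G x y z|)
      ≤ Real.sqrt (∫ y in Ioo (0:ℝ) L₂, ∫ z in Ioo (-1:ℝ) 1, F x y z ^ 2) *
        Real.sqrt (∫ y in Ioo (0:ℝ) L₂, ∫ z in Ioo (-1:ℝ) 1, G x y z ^ 2) := by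
    intro x
    have cu : Continuous fun y => Real.sqrt (∫ z in Ioo (-1:ℝ) 1, F x y z ^ 2) :=
      Real.continuous_sqrt.comp (cPF.comp (hsl x))
    have cv : Continuous fun y => Real.sqrt (∫ z in Ioo (-1:ℝ) 1, G x y z ^ 2) :=
      Real.continuous_sqrt.comp (cPG.comp (hsl x))
    have m1 : (∫ y in Ioo (0:ℝ) L₂, ∫ z in Ioo (-1:ℝ) 1, |F x y z| * |G x y z|)
        ≤ ∫ y in Ioo (0:ℝ) L₂, Real.sqrt (∫ z in Ioo (-1:ℝ) 1, F x y z ^ 2) *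
            Real.sqrt (∫ z in Ioo (-1:ℝ) 1, G x y z ^ 2) :=
      setIntegral_mono_on (intOn (cAbs.comp (hsl x))) (intOn (cu.mul cv))
        measurableSet_Ioo fun y _ => hz x y
    have m2 := cs (a := (0:ℝ)) (b := L₂) cu cv
    have e1 : ∀ y : ℝ, Real.sqrt (∫ z in Ioo (-1:ℝ) 1, F x y z ^ 2) ^ 2
        = ∫ z in Ioo (-1:ℝ) 1, F x y z ^ 2 := fun y =>
      Real.sq_sqrt (integral_nonneg fun z => sq_nonneg _)
    have e2 : ∀ y : ℝ, Real.sqrt (∫ z in Ioo (-1:ℝ) 1, G x y z ^ 2) ^ 2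
        = ∫ z in Ioo (-1:ℝ) 1, G x y z ^ 2 := fun y =>
      Real.sq_sqrt (integral_nonneg fun z => sq_nonneg _)
    simp only [e1, e2] at m2
    exact m1.trans m2
  -- x-level
  have cu : Continuous fun x => Real.sqrt (∫ y in Ioo (0:ℝ) L₂, ∫ z in Ioo (-1:ℝ) 1,
      F x y z ^ 2) := by
    refine Real.continuous_sqrt.comp ?_
    exact contParam (w := fun x y => ∫ z in Ioo (-1:ℝ) 1, F x y z ^ 2) cPF 0 L₂
  have cv : Continuous fun x => Real.sqrt (∫ y in Ioo (0:ℝ) L₂, ∫ z in Ioo (-1:ℝ) 1,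
      G x y z ^ 2) := by
    refine Real.continuous_sqrt.comp ?_
    exact contParam (w := fun x y => ∫ z in Ioo (-1:ℝ) 1, G x y z ^ 2) cPG 0 L₂
  have m1 : (∫ x in Ioo (0:ℝ) L₁, ∫ y in Ioo (0:ℝ) L₂, ∫ z in Ioo (-1:ℝ) 1,
        |F x y z| * |G x y z|)
      ≤ ∫ x in Ioo (0:ℝ) L₁,
          Real.sqrt (∫ y in Ioo (0:ℝ) L₂, ∫ z in Ioo (-1:ℝ) 1, F x y z ^ 2) *
          Real.sqrt (∫ y in Ioo (0:ℝ) L₂, ∫ z in Ioo (-1:ℝ) 1, G x y z ^ 2) := by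
    refine setIntegral_mono_on ?_ (intOn (cu.mul cv)) measurableSet_Ioo fun x _ => hy x
    exact intOn (contParam (w := fun x y => ∫ z in Ioo (-1:ℝ) 1, |F x y z| * |G x y z|)
      cAbs 0 L₂)
  have m2 := cs (a := (0:ℝ)) (b := L₁) cu cv
  have e1 : ∀ x : ℝ, Real.sqrt (∫ y in Ioo (0:ℝ) L₂, ∫ z in Ioo (-1:ℝ) 1, F x y z ^ 2) ^ 2
      = ∫ y in Ioo (0:ℝ) L₂, ∫ z in Ioo (-1:ℝ) 1, F x y z ^ 2 := fun x =>
    Real.sq_sqrt (integral_nonneg fun y => integral_nonneg fun z => sq_nonneg _)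
  have e2 : ∀ x : ℝ, Real.sqrt (∫ y in Ioo (0:ℝ) L₂, ∫ z in Ioo (-1:ℝ) 1, G x y z ^ 2) ^ 2
      = ∫ y in Ioo (0:ℝ) L₂, ∫ z in Ioo (-1:ℝ) 1, G x y z ^ 2 := fun x =>
    Real.sq_sqrt (integral_nonneg fun y => integral_nonneg fun z => sq_nonneg _)
  simp only [e1, e2] at m2
  exact m1.trans m2

/-- Core anisotropic (Ladyzhenskaya-type) estimate for `∫∫ (∫ F² dz)²`. -/
lemma core {L₁ L₂ : ℝ} (hL₁ : 0 < L₁) (hL₂ : 0 < L₂) {f : ℝ → ℝ → ℝ → ℝ}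
    (hf : ContDiff ℝ 1 (fun q : ℝ × ℝ × ℝ => f q.1 q.2.1 q.2.2)) :
    (∫ x in Ioo (0:ℝ) L₁, ∫ y in Ioo (0:ℝ) L₂,
        (∫ z in Ioo (-1:ℝ) 1, f x y z ^ 2) ^ 2)
      ≤ ((1 / L₁) * (∫ x in Ioo (0:ℝ) L₁, ∫ y in Ioo (0:ℝ) L₂, ∫ z in Ioo (-1:ℝ) 1,
              f x y z ^ 2)
          + 2 * (Real.sqrt (∫ x in Ioo (0:ℝ) L₁, ∫ y in Ioo (0:ℝ) L₂, ∫ z in Ioo (-1:ℝ) 1,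
              f x y z ^ 2)
            * Real.sqrt (∫ x in Ioo (0:ℝ) L₁, ∫ y in Ioo (0:ℝ) L₂, ∫ z in Ioo (-1:ℝ) 1,
              dX f x y z ^ 2)))
        * ((1 / L₂) * (∫ x in Ioo (0:ℝ) L₁, ∫ y in Ioo (0:ℝ) L₂, ∫ z in Ioo (-1:ℝ) 1,
              f x y z ^ 2)
          + 2 * (Real.sqrt (∫ x in Ioo (0:ℝ) L₁, ∫ y in Ioo (0:ℝ) L₂, ∫ z in Ioo (-1:ℝ) 1,
              f x y z ^ 2)
            * Real.sqrt (∫ x in Ioo (0:ℝ) L₁, ∫ y in Ioo (0:ℝ) L₂, ∫ z in Ioo (-1:ℝ) 1,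
              dY f x y z ^ 2))) := by
  have hFc : Continuous fun q : ℝ × ℝ × ℝ => f q.1 q.2.1 q.2.2 := hf.continuous
  have hXc : Continuous fun q : ℝ × ℝ × ℝ => dX f q.1 q.2.1 q.2.2 := contDX hf
  have hYc : Continuous fun q : ℝ × ℝ × ℝ => dY f q.1 q.2.1 q.2.2 := contDY hf
  have hrea : Continuous fun q : (ℝ × ℝ) × ℝ => ((q.1.1, q.1.2, q.2) : ℝ × ℝ × ℝ) := by
    fun_prop
  have hFj : Continuous fun q : (ℝ × ℝ) × ℝ => f q.1.1 q.1.2 q.2 := hFc.comp hrea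
  have hXj : Continuous fun q : (ℝ × ℝ) × ℝ => dX f q.1.1 q.1.2 q.2 := hXc.comp hrea
  have hYj : Continuous fun q : (ℝ × ℝ) × ℝ => dY f q.1.1 q.1.2 q.2 := hYc.comp hrea
  have hsl : ∀ x : ℝ, Continuous fun y : ℝ => ((x, y) : ℝ × ℝ) := fun x =>
    continuous_const.prodMk continuous_id
  set Iq : ℝ → ℝ → ℝ := fun s y => ∫ z in Ioo (-1:ℝ) 1, f s y z ^ 2 with hIq
  set JX : ℝ → ℝ → ℝ := fun s y => ∫ z in Ioo (-1:ℝ) 1, 2 * |f s y z| * |dX f s y z| with hJX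
  set JY : ℝ → ℝ → ℝ := fun s y => ∫ z in Ioo (-1:ℝ) 1, 2 * |f s y z| * |dY f s y z| with hJY
  have cIq : Continuous fun p : ℝ × ℝ => Iq p.1 p.2 :=
    contParam (w := fun (p : ℝ × ℝ) z => f p.1 p.2 z ^ 2) (hFj.pow 2) (-1) 1
  have cJX : Continuous fun p : ℝ × ℝ => JX p.1 p.2 :=
    contParam (w := fun (p : ℝ × ℝ) z => 2 * |f p.1 p.2 z| * |dX f p.1 p.2 z|)
      ((continuous_const.mul hFj.abs).mul hXj.abs) (-1) 1
  have cJY : Continuous fun p : ℝ × ℝ => JY p.1 p.2 :=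
    contParam (w := fun (p : ℝ × ℝ) z => 2 * |f p.1 p.2 z| * |dY f p.1 p.2 z|)
      ((continuous_const.mul hFj.abs).mul hYj.abs) (-1) 1
  set A : ℝ → ℝ := fun y => (1 / L₁) * (∫ s in Ioo (0:ℝ) L₁, Iq s y)
      + ∫ s in Ioo (0:ℝ) L₁, JX s y with hA
  set B : ℝ → ℝ := fun x => (1 / L₂) * (∫ t in Ioo (0:ℝ) L₂, Iq x t)
      + ∫ t in Ioo (0:ℝ) L₂, JY x t with hB
  have cA : Continuous A := by
    apply Continuous.add
    · exact continuous_const.mul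
        (contParam (w := fun y s => Iq s y) (cIq.comp continuous_swap) 0 L₁)
    · exact contParam (w := fun y s => JX s y) (cJX.comp continuous_swap) 0 L₁
  have cB : Continuous B := by
    apply Continuous.add
    · exact continuous_const.mul (contParam (w := fun x t => Iq x t) cIq 0 L₂)
    · exact contParam (w := fun x t => JY x t) cJY 0 L₂
  have Iq_nonneg : ∀ x y, 0 ≤ Iq x y := fun x y => integral_nonneg fun z => sq_nonneg _
  have A_nonneg : ∀ y, 0 ≤ A y := by
    intro y
    apply add_nonneg
    · exact mul_nonneg (by positivity) (integral_nonneg fun s => Iq_nonneg s y)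
    · exact integral_nonneg fun s => integral_nonneg fun z => by positivity
  have B_nonneg : ∀ x, 0 ≤ B x := by
    intro x
    apply add_nonneg
    · exact mul_nonneg (by positivity) (integral_nonneg fun t => Iq_nonneg x t)
    · exact integral_nonneg fun t => integral_nonneg fun z => by positivity
  -- P ≤ A
  have hPA : ∀ y : ℝ, ∀ x ∈ Ioo (0:ℝ) L₁, Iq x y ≤ A y := by
    intro y x hx
    have hptz : ∀ z : ℝ, f x y z ^ 2 ≤ (1 / L₁) * (∫ s in Ioo (0:ℝ) L₁, f s y z ^ 2)
        + ∫ s in Ioo (0:ℝ) L₁, 2 * |f s y z| * |dX f s y z| := by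
      intro z
      have h := mean_bound hL₁ (sq_partial_x hf y z).1 hx
      have e : (fun s => |deriv (fun s => f s y z ^ 2) s|)
          = fun s => 2 * |f s y z| * |dX f s y z| := by
        funext s
        rw [(sq_partial_x hf y z).2 s, abs_mul, abs_mul]
        norm_num
      rw [e] at h
      exact h
    have c1 : Continuous fun q : ℝ × ℝ => f q.2 y q.1 :=
      hFc.comp (by fun_prop : Continuous fun q : ℝ × ℝ => ((q.2, y, q.1) : ℝ × ℝ × ℝ))
    have c2 : Continuous fun q : ℝ × ℝ => dX f q.2 y q.1 :=
      hXc.comp (by fun_prop : Continuous fun q : ℝ × ℝ => ((q.2, y, q.1) : ℝ × ℝ × ℝ))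
    have cm1 : Continuous fun z : ℝ => ∫ s in Ioo (0:ℝ) L₁, f s y z ^ 2 :=
      contParam (w := fun z s => f s y z ^ 2) (c1.pow 2) 0 L₁
    have cm2 : Continuous fun z : ℝ => ∫ s in Ioo (0:ℝ) L₁,
        2 * |f s y z| * |dX f s y z| :=
      contParam (w := fun z s => 2 * |f s y z| * |dX f s y z|)
        ((continuous_const.mul c1.abs).mul c2.abs) 0 L₁
    have hz1 : Iq x y ≤ ∫ z in Ioo (-1:ℝ) 1,
        ((1 / L₁) * (∫ s in Ioo (0:ℝ) L₁, f s y z ^ 2)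
          + ∫ s in Ioo (0:ℝ) L₁, 2 * |f s y z| * |dX f s y z|) := by
      refine setIntegral_mono_on (intOn ?_) (intOn ((continuous_const.mul cm1).add cm2))
        measurableSet_Ioo fun z _ => hptz z
      exact (hFc.comp (by fun_prop : Continuous fun z : ℝ =>
        ((x, y, z) : ℝ × ℝ × ℝ))).pow 2
    rw [integral_add (intOn (u := fun z => (1 / L₁) * ∫ s in Ioo (0:ℝ) L₁, f s y z ^ 2)
        (continuous_const.mul cm1)) (intOn cm2),
      integral_const_mul] at hz1
    have sw1 : (∫ z in Ioo (-1:ℝ) 1, ∫ s in Ioo (0:ℝ) L₁, f s y z ^ 2)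
        = ∫ s in Ioo (0:ℝ) L₁, Iq s y :=
      swapInt (w := fun z s => f s y z ^ 2) (c1.pow 2)
    have sw2 : (∫ z in Ioo (-1:ℝ) 1, ∫ s in Ioo (0:ℝ) L₁, 2 * |f s y z| * |dX f s y z|)
        = ∫ s in Ioo (0:ℝ) L₁, JX s y :=
      swapInt (w := fun z s => 2 * |f s y z| * |dX f s y z|)
        ((continuous_const.mul c1.abs).mul c2.abs)
    rw [sw1, sw2] at hz1
    exact hz1
  -- P ≤ B
  have hPB : ∀ x : ℝ, ∀ y ∈ Ioo (0:ℝ) L₂, Iq x y ≤ B x := by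
    intro x y hy
    have hptz : ∀ z : ℝ, f x y z ^ 2 ≤ (1 / L₂) * (∫ t in Ioo (0:ℝ) L₂, f x t z ^ 2)
        + ∫ t in Ioo (0:ℝ) L₂, 2 * |f x t z| * |dY f x t z| := by
      intro z
      have h := mean_bound hL₂ (sq_partial_y hf x z).1 hy
      have e : (fun t => |deriv (fun t => f x t z ^ 2) t|)
          = fun t => 2 * |f x t z| * |dY f x t z| := by
        funext t
        rw [(sq_partial_y hf x z).2 t, abs_mul, abs_mul]
        norm_num
      rw [e] at h
      exact h
    have c1 : Continuous fun q : ℝ × ℝ => f x q.2 q.1 :=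
      hFc.comp (by fun_prop : Continuous fun q : ℝ × ℝ => ((x, q.2, q.1) : ℝ × ℝ × ℝ))
    have c2 : Continuous fun q : ℝ × ℝ => dY f x q.2 q.1 :=
      hYc.comp (by fun_prop : Continuous fun q : ℝ × ℝ => ((x, q.2, q.1) : ℝ × ℝ × ℝ))
    have cm1 : Continuous fun z : ℝ => ∫ t in Ioo (0:ℝ) L₂, f x t z ^ 2 :=
      contParam (w := fun z t => f x t z ^ 2) (c1.pow 2) 0 L₂
    have cm2 : Continuous fun z : ℝ => ∫ t in Ioo (0:ℝ) L₂,
        2 * |f x t z| * |dY f x t z| :=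
      contParam (w := fun z t => 2 * |f x t z| * |dY f x t z|)
        ((continuous_const.mul c1.abs).mul c2.abs) 0 L₂
    have hz1 : Iq x y ≤ ∫ z in Ioo (-1:ℝ) 1,
        ((1 / L₂) * (∫ t in Ioo (0:ℝ) L₂, f x t z ^ 2)
          + ∫ t in Ioo (0:ℝ) L₂, 2 * |f x t z| * |dY f x t z|) := by
      refine setIntegral_mono_on (intOn ?_) (intOn ((continuous_const.mul cm1).add cm2))
        measurableSet_Ioo fun z _ => hptz z
      exact (hFc.comp (by fun_prop : Continuous fun z : ℝ =>
        ((x, y, z) : ℝ × ℝ × ℝ))).pow 2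
    rw [integral_add (intOn (u := fun z => (1 / L₂) * ∫ t in Ioo (0:ℝ) L₂, f x t z ^ 2)
        (continuous_const.mul cm1)) (intOn cm2),
      integral_const_mul] at hz1
    have sw1 : (∫ z in Ioo (-1:ℝ) 1, ∫ t in Ioo (0:ℝ) L₂, f x t z ^ 2)
        = ∫ t in Ioo (0:ℝ) L₂, Iq x t :=
      swapInt (w := fun z t => f x t z ^ 2) (c1.pow 2)
    have sw2 : (∫ z in Ioo (-1:ℝ) 1, ∫ t in Ioo (0:ℝ) L₂, 2 * |f x t z| * |dY f x t z|)
        = ∫ t in Ioo (0:ℝ) L₂, JY x t :=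
      swapInt (w := fun z t => 2 * |f x t z| * |dY f x t z|)
        ((continuous_const.mul c1.abs).mul c2.abs)
    rw [sw1, sw2] at hz1
    exact hz1
  -- combine: ∫∫ Iq² ≤ (∫ A) * (∫ B)
  have main1 : ∀ x ∈ Ioo (0:ℝ) L₁,
      (∫ y in Ioo (0:ℝ) L₂, Iq x y ^ 2) ≤ (∫ y in Ioo (0:ℝ) L₂, A y) * B x := by
    intro x hx
    have step : (∫ y in Ioo (0:ℝ) L₂, Iq x y ^ 2) ≤ ∫ y in Ioo (0:ℝ) L₂, A y * B x := by
      refine setIntegral_mono_on (intOn ((cIq.comp (hsl x)).pow 2))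
        (intOn (cA.mul continuous_const)) measurableSet_Ioo fun y hy => ?_
      have h1 := hPA y x hx
      have h2 := hPB x y hy
      nlinarith [Iq_nonneg x y, A_nonneg y, B_nonneg x]
    rwa [integral_mul_const] at step
  have main2 : (∫ x in Ioo (0:ℝ) L₁, ∫ y in Ioo (0:ℝ) L₂, Iq x y ^ 2)
      ≤ (∫ y in Ioo (0:ℝ) L₂, A y) * ∫ x in Ioo (0:ℝ) L₁, B x := by
    have step : (∫ x in Ioo (0:ℝ) L₁, ∫ y in Ioo (0:ℝ) L₂, Iq x y ^ 2)
        ≤ ∫ x in Ioo (0:ℝ) L₁, (∫ y in Ioo (0:ℝ) L₂, A y) * B x := by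
      refine setIntegral_mono_on ?_ (intOn (continuous_const.mul cB))
        measurableSet_Ioo main1
      exact intOn (contParam (w := fun x y => Iq x y ^ 2) (cIq.pow 2) 0 L₂)
    rwa [integral_const_mul] at step
  -- bound ∫ A
  have boundA : (∫ y in Ioo (0:ℝ) L₂, A y)
      ≤ (1 / L₁) * (∫ x in Ioo (0:ℝ) L₁, ∫ y in Ioo (0:ℝ) L₂, Iq x y)
        + 2 * (Real.sqrt (∫ x in Ioo (0:ℝ) L₁, ∫ y in Ioo (0:ℝ) L₂, ∫ z in Ioo (-1:ℝ) 1,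
              f x y z ^ 2)
          * Real.sqrt (∫ x in Ioo (0:ℝ) L₁, ∫ y in Ioo (0:ℝ) L₂, ∫ z in Ioo (-1:ℝ) 1,
              dX f x y z ^ 2)) := by
    have cIA : Continuous fun y => ∫ s in Ioo (0:ℝ) L₁, Iq s y :=
      contParam (w := fun y s => Iq s y) (cIq.comp continuous_swap) 0 L₁
    have cJA : Continuous fun y => ∫ s in Ioo (0:ℝ) L₁, JX s y :=
      contParam (w := fun y s => JX s y) (cJX.comp continuous_swap) 0 L₁
    have e1 : (∫ y in Ioo (0:ℝ) L₂, A y)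
        = (1 / L₁) * (∫ y in Ioo (0:ℝ) L₂, ∫ s in Ioo (0:ℝ) L₁, Iq s y)
          + ∫ y in Ioo (0:ℝ) L₂, ∫ s in Ioo (0:ℝ) L₁, JX s y := by
      rw [hA]
      rw [integral_add (intOn (u := fun y => (1 / L₁) * ∫ s in Ioo (0:ℝ) L₁, Iq s y)
        (continuous_const.mul cIA)) (intOn cJA), integral_const_mul]
    have sw1 : (∫ y in Ioo (0:ℝ) L₂, ∫ s in Ioo (0:ℝ) L₁, Iq s y)
        = ∫ s in Ioo (0:ℝ) L₁, ∫ y in Ioo (0:ℝ) L₂, Iq s y :=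
      swapInt (w := fun y s => Iq s y) (cIq.comp continuous_swap)
    have sw2 : (∫ y in Ioo (0:ℝ) L₂, ∫ s in Ioo (0:ℝ) L₁, JX s y)
        = ∫ s in Ioo (0:ℝ) L₁, ∫ y in Ioo (0:ℝ) L₂, JX s y :=
      swapInt (w := fun y s => JX s y) (cJX.comp continuous_swap)
    have hcs : (∫ s in Ioo (0:ℝ) L₁, ∫ y in Ioo (0:ℝ) L₂, JX s y)
        ≤ 2 * (Real.sqrt (∫ x in Ioo (0:ℝ) L₁, ∫ y in Ioo (0:ℝ) L₂, ∫ z in Ioo (-1:ℝ) 1,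
              f x y z ^ 2)
          * Real.sqrt (∫ x in Ioo (0:ℝ) L₁, ∫ y in Ioo (0:ℝ) L₂, ∫ z in Ioo (-1:ℝ) 1,
              dX f x y z ^ 2)) := by
      have epull : (∫ s in Ioo (0:ℝ) L₁, ∫ y in Ioo (0:ℝ) L₂, JX s y)
          = 2 * ∫ s in Ioo (0:ℝ) L₁, ∫ y in Ioo (0:ℝ) L₂, ∫ z in Ioo (-1:ℝ) 1,
              |f s y z| * |dX f s y z| := by
        rw [← integral_const_mul]
        refine setIntegral_congr_fun measurableSet_Ioo fun s _ => ?_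
        rw [← integral_const_mul]
        refine setIntegral_congr_fun measurableSet_Ioo fun y _ => ?_
        rw [← integral_const_mul]
        refine setIntegral_congr_fun measurableSet_Ioo fun z _ => ?_
        ring
      rw [epull]
      have := cs3 (L₁ := L₁) (L₂ := L₂) hFc hXc
      nlinarith [this]
    calc (∫ y in Ioo (0:ℝ) L₂, A y)
        = (1 / L₁) * (∫ s in Ioo (0:ℝ) L₁, ∫ y in Ioo (0:ℝ) L₂, Iq s y)
          + ∫ s in Ioo (0:ℝ) L₁, ∫ y in Ioo (0:ℝ) L₂, JX s y := by rw [e1, sw1, sw2]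
      _ ≤ _ := by
          have h1 : 0 < 1 / L₁ := by positivity
          exact add_le_add le_rfl hcs
  -- bound ∫ B
  have boundB : (∫ x in Ioo (0:ℝ) L₁, B x)
      ≤ (1 / L₂) * (∫ x in Ioo (0:ℝ) L₁, ∫ y in Ioo (0:ℝ) L₂, Iq x y)
        + 2 * (Real.sqrt (∫ x in Ioo (0:ℝ) L₁, ∫ y in Ioo (0:ℝ) L₂, ∫ z in Ioo (-1:ℝ) 1,
              f x y z ^ 2)
          * Real.sqrt (∫ x in Ioo (0:ℝ) L₁, ∫ y in Ioo (0:ℝ) L₂, ∫ z in Ioo (-1:ℝ) 1,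
              dY f x y z ^ 2)) := by
    have cIB : Continuous fun x => ∫ t in Ioo (0:ℝ) L₂, Iq x t :=
      contParam (w := fun x t => Iq x t) cIq 0 L₂
    have cJB : Continuous fun x => ∫ t in Ioo (0:ℝ) L₂, JY x t :=
      contParam (w := fun x t => JY x t) cJY 0 L₂
    have e1 : (∫ x in Ioo (0:ℝ) L₁, B x)
        = (1 / L₂) * (∫ x in Ioo (0:ℝ) L₁, ∫ t in Ioo (0:ℝ) L₂, Iq x t)
          + ∫ x in Ioo (0:ℝ) L₁, ∫ t in Ioo (0:ℝ) L₂, JY x t := by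
      rw [hB]
      rw [integral_add (intOn (u := fun x => (1 / L₂) * ∫ t in Ioo (0:ℝ) L₂, Iq x t)
        (continuous_const.mul cIB)) (intOn cJB), integral_const_mul]
    have hcs : (∫ x in Ioo (0:ℝ) L₁, ∫ t in Ioo (0:ℝ) L₂, JY x t)
        ≤ 2 * (Real.sqrt (∫ x in Ioo (0:ℝ) L₁, ∫ y in Ioo (0:ℝ) L₂, ∫ z in Ioo (-1:ℝ) 1,
              f x y z ^ 2)
          * Real.sqrt (∫ x in Ioo (0:ℝ) L₁, ∫ y in Ioo (0:ℝ) L₂, ∫ z in Ioo (-1:ℝ) 1,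
              dY f x y z ^ 2)) := by
      have epull : (∫ x in Ioo (0:ℝ) L₁, ∫ t in Ioo (0:ℝ) L₂, JY x t)
          = 2 * ∫ x in Ioo (0:ℝ) L₁, ∫ y in Ioo (0:ℝ) L₂, ∫ z in Ioo (-1:ℝ) 1,
              |f x y z| * |dY f x y z| := by
        rw [← integral_const_mul]
        refine setIntegral_congr_fun measurableSet_Ioo fun s _ => ?_
        rw [← integral_const_mul]
        refine setIntegral_congr_fun measurableSet_Ioo fun y _ => ?_
        rw [← integral_const_mul]
        refine setIntegral_congr_fun measurableSet_Ioo fun z _ => ?_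
        ring
      rw [epull]
      have := cs3 (L₁ := L₁) (L₂ := L₂) hFc hYc
      nlinarith [this]
    calc (∫ x in Ioo (0:ℝ) L₁, B x)
        = (1 / L₂) * (∫ x in Ioo (0:ℝ) L₁, ∫ t in Ioo (0:ℝ) L₂, Iq x t)
          + ∫ x in Ioo (0:ℝ) L₁, ∫ t in Ioo (0:ℝ) L₂, JY x t := e1
      _ ≤ _ := add_le_add le_rfl hcs
  -- finish
  have hAI : 0 ≤ ∫ y in Ioo (0:ℝ) L₂, A y := integral_nonneg A_nonneg
  have hBI : 0 ≤ ∫ x in Ioo (0:ℝ) L₁, B x := integral_nonneg B_nonneg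
  calc (∫ x in Ioo (0:ℝ) L₁, ∫ y in Ioo (0:ℝ) L₂, Iq x y ^ 2)
      ≤ (∫ y in Ioo (0:ℝ) L₂, A y) * ∫ x in Ioo (0:ℝ) L₁, B x := main2
    _ ≤ _ := by
        refine mul_le_mul boundA boundB hBI ?_
        exact le_trans hAI boundA

end ALady

open ALady

set_option maxHeartbeats 1000000 in
/-- Pure scalar arithmetic finishing lemma. -/
lemma finarith {k₁ k₂ K lhs QQ W PP RR If IfX IfY Ih IhX IhY : ℝ}
    (hk1 : 0 ≤ k₁) (hk2 : 0 ≤ k₂)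
    (hK1 : k₁ ≤ K) (hK2 : k₂ ≤ K) (h2K : (2:ℝ) ≤ K)
    (h3 : lhs ≤ Real.sqrt QQ * Real.sqrt W)
    (h4 : W ≤ 2 * (Real.sqrt PP * Real.sqrt RR))
    (cf : PP ≤ (k₁ * If + 2 * (Real.sqrt If * Real.sqrt IfX))
      * (k₂ * If + 2 * (Real.sqrt If * Real.sqrt IfY)))
    (ch : RR ≤ (k₁ * Ih + 2 * (Real.sqrt Ih * Real.sqrt IhX))
      * (k₂ * Ih + 2 * (Real.sqrt Ih * Real.sqrt IhY)))
    (hIf : 0 ≤ If) (hIfX : 0 ≤ IfX) (hIfY : 0 ≤ IfY)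
    (hIh : 0 ≤ Ih) (hIhX : 0 ≤ IhX) (hIhY : 0 ≤ IhY) (hQQ : 0 ≤ QQ) :
    lhs ≤ 2 * K * Real.sqrt (Real.sqrt If)
      * (Real.sqrt (Real.sqrt If) + Real.sqrt (Real.sqrt (IfX + IfY)))
      * Real.sqrt QQ * Real.sqrt (Real.sqrt Ih)
      * (Real.sqrt (Real.sqrt Ih) + Real.sqrt (Real.sqrt (IhX + IhY))) := by
  have hKpos : 0 < K := lt_of_lt_of_le two_pos h2K
  set a : ℝ := Real.sqrt If with ha
  set b : ℝ := Real.sqrt (IfX + IfY) with hb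
  set c : ℝ := Real.sqrt Ih with hc
  set d : ℝ := Real.sqrt (IhX + IhY) with hd
  have ann : 0 ≤ a := Real.sqrt_nonneg _
  have bnn : 0 ≤ b := Real.sqrt_nonneg _
  have cnn : 0 ≤ c := Real.sqrt_nonneg _
  have dnn : 0 ≤ d := Real.sqrt_nonneg _
  have haa : If = a * a := (Real.mul_self_sqrt hIf).symm
  have hcc : Ih = c * c := (Real.mul_self_sqrt hIh).symm
  have hbX : Real.sqrt IfX ≤ b := Real.sqrt_le_sqrt (le_add_of_nonneg_right hIfY)
  have hbY : Real.sqrt IfY ≤ b := Real.sqrt_le_sqrt (le_add_of_nonneg_left hIfX)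
  have hdX : Real.sqrt IhX ≤ d := Real.sqrt_le_sqrt (le_add_of_nonneg_right hIhY)
  have hdY : Real.sqrt IhY ≤ d := Real.sqrt_le_sqrt (le_add_of_nonneg_left hIhX)
  have hWnn : 0 ≤ Real.sqrt W := Real.sqrt_nonneg _
  -- PP, RR are bounded by squares
  have key : ∀ s t : ℝ, s ≤ b → t ≤ b → 0 ≤ s → 0 ≤ t →
      (k₁ * If + 2 * (a * s)) * (k₂ * If + 2 * (a * t))
        ≤ (K * (a * a + a * b)) ^ 2 := by
    intro s t hs ht hsn htn
    have base : ∀ k : ℝ, k ≤ K → 0 ≤ k → ∀ r : ℝ, r ≤ b → 0 ≤ r →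
        k * If + 2 * (a * r) ≤ K * (a * a + a * b) := by
      intro k hk hk0 r hr hr0
      rw [haa]
      have u1 : k * (a * a) ≤ K * (a * a) :=
        mul_le_mul_of_nonneg_right hk (mul_nonneg ann ann)
      have u2 : a * r ≤ a * b := mul_le_mul_of_nonneg_left hr ann
      have u3 : 2 * (a * r) ≤ 2 * (a * b) := by linarith
      have u4 : 2 * (a * b) ≤ K * (a * b) :=
        mul_le_mul_of_nonneg_right h2K (mul_nonneg ann bnn)
      have : K * (a * a) + K * (a * b) = K * (a * a + a * b) := by ring
      linarith
    have t1 := base k₁ hK1 hk1 s hs hsn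
    have t2 := base k₂ hK2 hk2 t ht htn
    have h0 : 0 ≤ k₂ * If + 2 * (a * t) := by
      have e1 : 0 ≤ k₂ * If := mul_nonneg hk2 hIf
      have e2 : 0 ≤ a * t := mul_nonneg ann htn
      linarith
    calc (k₁ * If + 2 * (a * s)) * (k₂ * If + 2 * (a * t))
        ≤ (K * (a * a + a * b)) * (K * (a * a + a * b)) := by
          refine mul_le_mul t1 t2 h0 ?_
          have h1 : 0 ≤ a * a + a * b :=
            add_nonneg (mul_nonneg ann ann) (mul_nonneg ann bnn)
          exact mul_nonneg hKpos.le h1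
      _ = (K * (a * a + a * b)) ^ 2 := by ring
  have keyc : ∀ s t : ℝ, s ≤ d → t ≤ d → 0 ≤ s → 0 ≤ t →
      (k₁ * Ih + 2 * (c * s)) * (k₂ * Ih + 2 * (c * t))
        ≤ (K * (c * c + c * d)) ^ 2 := by
    intro s t hs ht hsn htn
    have base : ∀ k : ℝ, k ≤ K → 0 ≤ k → ∀ r : ℝ, r ≤ d → 0 ≤ r →
        k * Ih + 2 * (c * r) ≤ K * (c * c + c * d) := by
      intro k hk hk0 r hr hr0
      rw [hcc]
      have u1 : k * (c * c) ≤ K * (c * c) :=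
        mul_le_mul_of_nonneg_right hk (mul_nonneg cnn cnn)
      have u2 : c * r ≤ c * d := mul_le_mul_of_nonneg_left hr cnn
      have u3 : 2 * (c * r) ≤ 2 * (c * d) := by linarith
      have u4 : 2 * (c * d) ≤ K * (c * d) :=
        mul_le_mul_of_nonneg_right h2K (mul_nonneg cnn dnn)
      have : K * (c * c) + K * (c * d) = K * (c * c + c * d) := by ring
      linarith
    have t1 := base k₁ hK1 hk1 s hs hsn
    have t2 := base k₂ hK2 hk2 t ht htn
    have h0 : 0 ≤ k₂ * Ih + 2 * (c * t) := by
      have e1 : 0 ≤ k₂ * Ih := mul_nonneg hk2 hIh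
      have e2 : 0 ≤ c * t := mul_nonneg cnn htn
      linarith
    calc (k₁ * Ih + 2 * (c * s)) * (k₂ * Ih + 2 * (c * t))
        ≤ (K * (c * c + c * d)) * (K * (c * c + c * d)) := by
          refine mul_le_mul t1 t2 h0 ?_
          have h1 : 0 ≤ c * c + c * d :=
            add_nonneg (mul_nonneg cnn cnn) (mul_nonneg cnn dnn)
          exact mul_nonneg hKpos.le h1
      _ = (K * (c * c + c * d)) ^ 2 := by ring
  have hPPb : PP ≤ (K * (a * a + a * b)) ^ 2 :=
    cf.trans (key _ _ hbX hbY (Real.sqrt_nonneg _) (Real.sqrt_nonneg _))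
  have hRRb : RR ≤ (K * (c * c + c * d)) ^ 2 :=
    ch.trans (keyc _ _ hdX hdY (Real.sqrt_nonneg _) (Real.sqrt_nonneg _))
  have hfacKa : 0 ≤ K * (a * a + a * b) :=
    mul_nonneg hKpos.le (add_nonneg (mul_nonneg ann ann) (mul_nonneg ann bnn))
  have hfacKc : 0 ≤ K * (c * c + c * d) :=
    mul_nonneg hKpos.le (add_nonneg (mul_nonneg cnn cnn) (mul_nonneg cnn dnn))
  have sPP : Real.sqrt (Real.sqrt PP)
      ≤ Real.sqrt K * (Real.sqrt a * (Real.sqrt a + Real.sqrt b)) := by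
    calc Real.sqrt (Real.sqrt PP) ≤ Real.sqrt (Real.sqrt ((K * (a * a + a * b)) ^ 2)) :=
          Real.sqrt_le_sqrt (Real.sqrt_le_sqrt hPPb)
      _ = Real.sqrt (K * (a * a + a * b)) := by rw [Real.sqrt_sq hfacKa]
      _ = Real.sqrt K * Real.sqrt (a * (a + b)) := by
          rw [show a * a + a * b = a * (a + b) by ring, Real.sqrt_mul hKpos.le]
      _ = Real.sqrt K * (Real.sqrt a * Real.sqrt (a + b)) := by rw [Real.sqrt_mul ann]
      _ ≤ Real.sqrt K * (Real.sqrt a * (Real.sqrt a + Real.sqrt b)) := by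
          refine mul_le_mul_of_nonneg_left (mul_le_mul_of_nonneg_left ?_
            (Real.sqrt_nonneg a)) (Real.sqrt_nonneg K)
          exact sqrt_add_le' a b ann bnn
  have sRR : Real.sqrt (Real.sqrt RR)
      ≤ Real.sqrt K * (Real.sqrt c * (Real.sqrt c + Real.sqrt d)) := by
    calc Real.sqrt (Real.sqrt RR) ≤ Real.sqrt (Real.sqrt ((K * (c * c + c * d)) ^ 2)) :=
          Real.sqrt_le_sqrt (Real.sqrt_le_sqrt hRRb)
      _ = Real.sqrt (K * (c * c + c * d)) := by rw [Real.sqrt_sq hfacKc]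
      _ = Real.sqrt K * Real.sqrt (c * (c + d)) := by
          rw [show c * c + c * d = c * (c + d) by ring, Real.sqrt_mul hKpos.le]
      _ = Real.sqrt K * (Real.sqrt c * Real.sqrt (c + d)) := by rw [Real.sqrt_mul cnn]
      _ ≤ Real.sqrt K * (Real.sqrt c * (Real.sqrt c + Real.sqrt d)) := by
          refine mul_le_mul_of_nonneg_left (mul_le_mul_of_nonneg_left ?_
            (Real.sqrt_nonneg c)) (Real.sqrt_nonneg K)
          exact sqrt_add_le' c d cnn dnn
  have step5 : Real.sqrt W
      ≤ Real.sqrt 2 * (Real.sqrt (Real.sqrt PP) * Real.sqrt (Real.sqrt RR)) := by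
    calc Real.sqrt W ≤ Real.sqrt (2 * (Real.sqrt PP * Real.sqrt RR)) := Real.sqrt_le_sqrt h4
      _ = Real.sqrt 2 * Real.sqrt (Real.sqrt PP * Real.sqrt RR) := by
          rw [Real.sqrt_mul (by norm_num : (0:ℝ) ≤ 2)]
      _ = Real.sqrt 2 * (Real.sqrt (Real.sqrt PP) * Real.sqrt (Real.sqrt RR)) := by
          rw [Real.sqrt_mul (Real.sqrt_nonneg _)]
  have sqrt2le : Real.sqrt 2 ≤ 2 := by
    nlinarith [Real.sq_sqrt (by norm_num : (0:ℝ) ≤ 2), Real.sqrt_nonneg 2]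
  calc lhs ≤ Real.sqrt QQ * Real.sqrt W := h3
    _ ≤ Real.sqrt QQ * (Real.sqrt 2 * (Real.sqrt (Real.sqrt PP) * Real.sqrt (Real.sqrt RR))) :=
        mul_le_mul_of_nonneg_left step5 (Real.sqrt_nonneg QQ)
    _ ≤ Real.sqrt QQ * (Real.sqrt 2 * ((Real.sqrt K * (Real.sqrt a * (Real.sqrt a
          + Real.sqrt b))) * (Real.sqrt K * (Real.sqrt c * (Real.sqrt c + Real.sqrt d))))) := by
        refine mul_le_mul_of_nonneg_left (mul_le_mul_of_nonneg_left ?_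
          (Real.sqrt_nonneg 2)) (Real.sqrt_nonneg QQ)
        refine mul_le_mul sPP sRR (Real.sqrt_nonneg _) ?_
        have h1 : 0 ≤ Real.sqrt a + Real.sqrt b :=
          add_nonneg (Real.sqrt_nonneg _) (Real.sqrt_nonneg _)
        exact mul_nonneg (Real.sqrt_nonneg K) (mul_nonneg (Real.sqrt_nonneg a) h1)
    _ = (Real.sqrt 2 * (Real.sqrt K * Real.sqrt K)) * (Real.sqrt a * (Real.sqrt a
          + Real.sqrt b) * Real.sqrt QQ * (Real.sqrt c * (Real.sqrt c + Real.sqrt d))) := by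
        ring
    _ ≤ (2 * K) * (Real.sqrt a * (Real.sqrt a + Real.sqrt b) * Real.sqrt QQ
          * (Real.sqrt c * (Real.sqrt c + Real.sqrt d))) := by
        have hKK : Real.sqrt 2 * (Real.sqrt K * Real.sqrt K) ≤ 2 * K := by
          rw [Real.mul_self_sqrt hKpos.le]
          exact mul_le_mul_of_nonneg_right sqrt2le hKpos.le
        refine mul_le_mul_of_nonneg_right hKK ?_
        have h1 : 0 ≤ Real.sqrt a + Real.sqrt b :=
          add_nonneg (Real.sqrt_nonneg _) (Real.sqrt_nonneg _)
        have h2 : 0 ≤ Real.sqrt c + Real.sqrt d :=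
          add_nonneg (Real.sqrt_nonneg _) (Real.sqrt_nonneg _)
        have h3 : 0 ≤ Real.sqrt QQ := Real.sqrt_nonneg _
        have h4 : 0 ≤ Real.sqrt a := Real.sqrt_nonneg _
        have h5 : 0 ≤ Real.sqrt c := Real.sqrt_nonneg _
        positivity
    _ = 2 * K * Real.sqrt a * (Real.sqrt a + Real.sqrt b) * Real.sqrt QQ
          * Real.sqrt c * (Real.sqrt c + Real.sqrt d) := by ring



set_option maxHeartbeats 2000000

/-- **Anisotropic Ladyzhenskaya-type inequality** (Lemma 2.2, first inequality): there is
`C > 0` depending only on `L₁, L₂` such that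
`∫_M (∫_{−1}^1 f dz)(∫_{−1}^1 g h dz) dxdy
  ≤ C ‖f‖₂^{1/2}(‖f‖₂^{1/2} + ‖∇_H f‖₂^{1/2}) ‖g‖₂ ‖h‖₂^{1/2}(‖h‖₂^{1/2} + ‖∇_H h‖₂^{1/2})`. -/
theorem anisotropic_ladyzhenskaya_one (L₁ L₂ : ℝ) (hL₁ : 0 < L₁) (hL₂ : 0 < L₂) :
    ∃ C > (0 : ℝ), ∀ f g h : ℝ → ℝ → ℝ → ℝ,
      ContDiff ℝ 1 (fun q : ℝ × ℝ × ℝ => f q.1 q.2.1 q.2.2) →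
      Continuous (fun q : ℝ × ℝ × ℝ => g q.1 q.2.1 q.2.2) →
      ContDiff ℝ 1 (fun q : ℝ × ℝ × ℝ => h q.1 q.2.1 q.2.2) →
      (∫ x in Ioo (0 : ℝ) L₁, ∫ y in Ioo (0 : ℝ) L₂,
          (∫ z in Ioo (-1 : ℝ) 1, f x y z) * (∫ z in Ioo (-1 : ℝ) 1, g x y z * h x y z))
        ≤ C * Real.sqrt (Real.sqrt (L2Sq L₁ L₂ f))
            * (Real.sqrt (Real.sqrt (L2Sq L₁ L₂ f))
                + Real.sqrt (Real.sqrt (GradHL2Sq L₁ L₂ f)))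
            * Real.sqrt (L2Sq L₁ L₂ g)
            * Real.sqrt (Real.sqrt (L2Sq L₁ L₂ h))
            * (Real.sqrt (Real.sqrt (L2Sq L₁ L₂ h))
                + Real.sqrt (Real.sqrt (GradHL2Sq L₁ L₂ h))) := by
  set K : ℝ := 1 / L₁ + 1 / L₂ + 2 with hK
  have hKpos : 0 < K := by positivity
  refine ⟨2 * K, by positivity, ?_⟩
  intro f g h hf hg hh
  have hfc : Continuous fun q : ℝ × ℝ × ℝ => f q.1 q.2.1 q.2.2 := hf.continuous
  have hhc : Continuous fun q : ℝ × ℝ × ℝ => h q.1 q.2.1 q.2.2 := hh.continuous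
  have hrea : Continuous fun q : (ℝ × ℝ) × ℝ => ((q.1.1, q.1.2, q.2) : ℝ × ℝ × ℝ) := by
    fun_prop
  have hFj : Continuous fun q : (ℝ × ℝ) × ℝ => f q.1.1 q.1.2 q.2 := hfc.comp hrea
  have hGj : Continuous fun q : (ℝ × ℝ) × ℝ => g q.1.1 q.1.2 q.2 := hg.comp hrea
  have hHj : Continuous fun q : (ℝ × ℝ) × ℝ => h q.1.1 q.1.2 q.2 := hhc.comp hrea
  have hsl : ∀ x : ℝ, Continuous fun y : ℝ => ((x, y) : ℝ × ℝ) := fun x =>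
    continuous_const.prodMk continuous_id
  have hslz : ∀ x y : ℝ, Continuous fun z : ℝ => (((x, y), z) : (ℝ × ℝ) × ℝ) := fun x y =>
    continuous_const.prodMk continuous_id
  have hFz : ∀ x y : ℝ, Continuous fun z => f x y z := fun x y => hFj.comp (hslz x y)
  have hGz : ∀ x y : ℝ, Continuous fun z => g x y z := fun x y => hGj.comp (hslz x y)
  have hHz : ∀ x y : ℝ, Continuous fun z => h x y z := fun x y => hHj.comp (hslz x y)
  -- 2D quantities
  set Φ : ℝ → ℝ → ℝ := fun x y => ∫ z in Ioo (-1:ℝ) 1, f x y z with hΦdef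
  set S : ℝ → ℝ → ℝ := fun x y => ∫ z in Ioo (-1:ℝ) 1, g x y z * h x y z with hSdef
  set P : ℝ → ℝ → ℝ := fun x y => ∫ z in Ioo (-1:ℝ) 1, f x y z ^ 2 with hPdef
  set Q : ℝ → ℝ → ℝ := fun x y => ∫ z in Ioo (-1:ℝ) 1, g x y z ^ 2 with hQdef
  set R : ℝ → ℝ → ℝ := fun x y => ∫ z in Ioo (-1:ℝ) 1, h x y z ^ 2 with hRdef
  have cΦ : Continuous fun p : ℝ × ℝ => Φ p.1 p.2 :=
    contParam (w := fun (p : ℝ × ℝ) z => f p.1 p.2 z) hFj (-1) 1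
  have cS : Continuous fun p : ℝ × ℝ => S p.1 p.2 :=
    contParam (w := fun (p : ℝ × ℝ) z => g p.1 p.2 z * h p.1 p.2 z) (hGj.mul hHj) (-1) 1
  have cP : Continuous fun p : ℝ × ℝ => P p.1 p.2 :=
    contParam (w := fun (p : ℝ × ℝ) z => f p.1 p.2 z ^ 2) (hFj.pow 2) (-1) 1
  have cQ : Continuous fun p : ℝ × ℝ => Q p.1 p.2 :=
    contParam (w := fun (p : ℝ × ℝ) z => g p.1 p.2 z ^ 2) (hGj.pow 2) (-1) 1
  have cR : Continuous fun p : ℝ × ℝ => R p.1 p.2 :=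
    contParam (w := fun (p : ℝ × ℝ) z => h p.1 p.2 z ^ 2) (hHj.pow 2) (-1) 1
  have Pnn : ∀ x y, 0 ≤ P x y := fun x y => integral_nonneg fun z => sq_nonneg _
  have Qnn : ∀ x y, 0 ≤ Q x y := fun x y => integral_nonneg fun z => sq_nonneg _
  have Rnn : ∀ x y, 0 ≤ R x y := fun x y => integral_nonneg fun z => sq_nonneg _
  -- pointwise bound on M
  have step1 : ∀ x y : ℝ, Φ x y * S x y
      ≤ Real.sqrt (Q x y) * (Real.sqrt 2 * Real.sqrt (P x y) * Real.sqrt (R x y)) := by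
    intro x y
    have hS : |S x y| ≤ Real.sqrt (Q x y) * Real.sqrt (R x y) := by
      have h1 : S x y ≤ Real.sqrt (Q x y) * Real.sqrt (R x y) := cs (hGz x y) (hHz x y)
      have h2 : -S x y ≤ Real.sqrt (Q x y) * Real.sqrt (R x y) := by
        have h3 := cs (a := (-1:ℝ)) (b := 1) (u := fun z => -g x y z) (hGz x y).neg (hHz x y)
        have e : (∫ z in Ioo (-1:ℝ) 1, -g x y z * h x y z) = -S x y := by
          rw [hSdef, ← integral_neg]
          exact setIntegral_congr_fun measurableSet_Ioo fun z _ => by ring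
        have e2 : (∫ z in Ioo (-1:ℝ) 1, (-g x y z) ^ 2) = Q x y := by
          rw [hQdef]
          exact setIntegral_congr_fun measurableSet_Ioo fun z _ => by ring
        rw [e, e2] at h3
        exact h3
      exact abs_le.2 ⟨by linarith, h1⟩
    have hΦ : |Φ x y| ≤ Real.sqrt 2 * Real.sqrt (P x y) := by
      have hone : (∫ z in Ioo (-1:ℝ) 1, (1:ℝ) ^ 2) = 2 := by
        simp only [one_pow, setIntegral_const, smul_eq_mul, mul_one, Real.volume_Ioo]
        norm_num
      have h1 : Φ x y ≤ Real.sqrt 2 * Real.sqrt (P x y) := by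
        have h3 := cs (a := (-1:ℝ)) (b := 1) (continuous_const : Continuous fun _ : ℝ => (1:ℝ))
          (hFz x y)
        have e : (∫ z in Ioo (-1:ℝ) 1, (1:ℝ) * f x y z) = Φ x y := by
          rw [hΦdef]
          exact setIntegral_congr_fun measurableSet_Ioo fun z _ => one_mul _
        rw [e, hone] at h3
        exact h3
      have h2 : -Φ x y ≤ Real.sqrt 2 * Real.sqrt (P x y) := by
        have h3 := cs (a := (-1:ℝ)) (b := 1) (continuous_const : Continuous fun _ : ℝ => (1:ℝ))
          (v := fun z => -f x y z) (hFz x y).neg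
        have e : (∫ z in Ioo (-1:ℝ) 1, (1:ℝ) * -f x y z) = -Φ x y := by
          rw [hΦdef, ← integral_neg]
          exact setIntegral_congr_fun measurableSet_Ioo fun z _ => by ring
        have e2 : (∫ z in Ioo (-1:ℝ) 1, (-f x y z) ^ 2) = P x y := by
          rw [hPdef]
          exact setIntegral_congr_fun measurableSet_Ioo fun z _ => by ring
        rw [e, e2, hone] at h3
        exact h3
      exact abs_le.2 ⟨by linarith, h1⟩
    calc Φ x y * S x y ≤ |Φ x y * S x y| := le_abs_self _
      _ = |Φ x y| * |S x y| := abs_mul _ _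
      _ ≤ (Real.sqrt 2 * Real.sqrt (P x y)) * (Real.sqrt (Q x y) * Real.sqrt (R x y)) :=
          mul_le_mul hΦ hS (abs_nonneg _) (by positivity)
      _ = _ := by ring
  -- integrate in y, Cauchy–Schwarz in y
  have step2 : ∀ x : ℝ, (∫ y in Ioo (0:ℝ) L₂, Φ x y * S x y)
      ≤ Real.sqrt (∫ y in Ioo (0:ℝ) L₂, Q x y)
        * Real.sqrt (∫ y in Ioo (0:ℝ) L₂, 2 * (P x y * R x y)) := by
    intro x
    have cu : Continuous fun y => Real.sqrt (Q x y) :=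
      Real.continuous_sqrt.comp (cQ.comp (hsl x))
    have cv : Continuous fun y => Real.sqrt 2 * Real.sqrt (P x y) * Real.sqrt (R x y) :=
      (continuous_const.mul (Real.continuous_sqrt.comp (cP.comp (hsl x)))).mul
        (Real.continuous_sqrt.comp (cR.comp (hsl x)))
    have m1 : (∫ y in Ioo (0:ℝ) L₂, Φ x y * S x y)
        ≤ ∫ y in Ioo (0:ℝ) L₂,
            Real.sqrt (Q x y) * (Real.sqrt 2 * Real.sqrt (P x y) * Real.sqrt (R x y)) :=
      setIntegral_mono_on (intOn ((cΦ.comp (hsl x)).mul (cS.comp (hsl x))))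
        (intOn (cu.mul cv)) measurableSet_Ioo fun y _ => step1 x y
    have m2 := cs (a := (0:ℝ)) (b := L₂) cu cv
    have e1 : ∀ y : ℝ, Real.sqrt (Q x y) ^ 2 = Q x y := fun y => Real.sq_sqrt (Qnn x y)
    have e2 : ∀ y : ℝ, (Real.sqrt 2 * Real.sqrt (P x y) * Real.sqrt (R x y)) ^ 2
        = 2 * (P x y * R x y) := fun y => by
      rw [mul_pow, mul_pow, Real.sq_sqrt (by norm_num : (0:ℝ) ≤ 2),
        Real.sq_sqrt (Pnn x y), Real.sq_sqrt (Rnn x y)]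
      ring
    simp only [e1, e2] at m2
    exact m1.trans m2
  -- Cauchy–Schwarz in x
  have cQy : Continuous fun x => ∫ y in Ioo (0:ℝ) L₂, Q x y :=
    contParam (w := fun x y => Q x y) cQ 0 L₂
  have cPRy : Continuous fun x => ∫ y in Ioo (0:ℝ) L₂, 2 * (P x y * R x y) :=
    contParam (w := fun x y => 2 * (P x y * R x y)) (continuous_const.mul (cP.mul cR)) 0 L₂
  have Qynn : ∀ x, 0 ≤ ∫ y in Ioo (0:ℝ) L₂, Q x y := fun x =>
    integral_nonneg fun y => Qnn x y
  have PRynn : ∀ x, 0 ≤ ∫ y in Ioo (0:ℝ) L₂, 2 * (P x y * R x y) := fun x =>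
    integral_nonneg fun y => by positivity
  have step3 : (∫ x in Ioo (0:ℝ) L₁, ∫ y in Ioo (0:ℝ) L₂, Φ x y * S x y)
      ≤ Real.sqrt (∫ x in Ioo (0:ℝ) L₁, ∫ y in Ioo (0:ℝ) L₂, Q x y)
        * Real.sqrt (∫ x in Ioo (0:ℝ) L₁, ∫ y in Ioo (0:ℝ) L₂, 2 * (P x y * R x y)) := by
    have cu : Continuous fun x => Real.sqrt (∫ y in Ioo (0:ℝ) L₂, Q x y) :=
      Real.continuous_sqrt.comp cQy
    have cv : Continuous fun x => Real.sqrt (∫ y in Ioo (0:ℝ) L₂, 2 * (P x y * R x y)) :=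
      Real.continuous_sqrt.comp cPRy
    have m1 : (∫ x in Ioo (0:ℝ) L₁, ∫ y in Ioo (0:ℝ) L₂, Φ x y * S x y)
        ≤ ∫ x in Ioo (0:ℝ) L₁, Real.sqrt (∫ y in Ioo (0:ℝ) L₂, Q x y)
            * Real.sqrt (∫ y in Ioo (0:ℝ) L₂, 2 * (P x y * R x y)) := by
      refine setIntegral_mono_on ?_ (intOn (cu.mul cv)) measurableSet_Ioo fun x _ => step2 x
      exact intOn (contParam (w := fun x y => Φ x y * S x y) (cΦ.mul cS) 0 L₂)
    have m2 := cs (a := (0:ℝ)) (b := L₁) cu cv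
    have e1 : ∀ x : ℝ, Real.sqrt (∫ y in Ioo (0:ℝ) L₂, Q x y) ^ 2
        = ∫ y in Ioo (0:ℝ) L₂, Q x y := fun x => Real.sq_sqrt (Qynn x)
    have e2 : ∀ x : ℝ, Real.sqrt (∫ y in Ioo (0:ℝ) L₂, 2 * (P x y * R x y)) ^ 2
        = ∫ y in Ioo (0:ℝ) L₂, 2 * (P x y * R x y) := fun x => Real.sq_sqrt (PRynn x)
    simp only [e1, e2] at m2
    exact m1.trans m2
  -- step4 : bound ∫∫ 2 P R
  have step4 : (∫ x in Ioo (0:ℝ) L₁, ∫ y in Ioo (0:ℝ) L₂, 2 * (P x y * R x y))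
      ≤ 2 * (Real.sqrt (∫ x in Ioo (0:ℝ) L₁, ∫ y in Ioo (0:ℝ) L₂, P x y ^ 2)
          * Real.sqrt (∫ x in Ioo (0:ℝ) L₁, ∫ y in Ioo (0:ℝ) L₂, R x y ^ 2)) := by
    have hy : ∀ x : ℝ, (∫ y in Ioo (0:ℝ) L₂, P x y * R x y)
        ≤ Real.sqrt (∫ y in Ioo (0:ℝ) L₂, P x y ^ 2)
          * Real.sqrt (∫ y in Ioo (0:ℝ) L₂, R x y ^ 2) := fun x =>
      cs (cP.comp (hsl x)) (cR.comp (hsl x))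
    have cu : Continuous fun x => Real.sqrt (∫ y in Ioo (0:ℝ) L₂, P x y ^ 2) :=
      Real.continuous_sqrt.comp (contParam (w := fun x y => P x y ^ 2) (cP.pow 2) 0 L₂)
    have cv : Continuous fun x => Real.sqrt (∫ y in Ioo (0:ℝ) L₂, R x y ^ 2) :=
      Real.continuous_sqrt.comp (contParam (w := fun x y => R x y ^ 2) (cR.pow 2) 0 L₂)
    have m1 : (∫ x in Ioo (0:ℝ) L₁, ∫ y in Ioo (0:ℝ) L₂, P x y * R x y)
        ≤ ∫ x in Ioo (0:ℝ) L₁, Real.sqrt (∫ y in Ioo (0:ℝ) L₂, P x y ^ 2)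
            * Real.sqrt (∫ y in Ioo (0:ℝ) L₂, R x y ^ 2) := by
      refine setIntegral_mono_on ?_ (intOn (cu.mul cv)) measurableSet_Ioo fun x _ => hy x
      exact intOn (contParam (w := fun x y => P x y * R x y) (cP.mul cR) 0 L₂)
    have m2 := cs (a := (0:ℝ)) (b := L₁) cu cv
    have e1 : ∀ x : ℝ, Real.sqrt (∫ y in Ioo (0:ℝ) L₂, P x y ^ 2) ^ 2
        = ∫ y in Ioo (0:ℝ) L₂, P x y ^ 2 := fun x =>
      Real.sq_sqrt (integral_nonneg fun y => sq_nonneg _)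
    have e2 : ∀ x : ℝ, Real.sqrt (∫ y in Ioo (0:ℝ) L₂, R x y ^ 2) ^ 2
        = ∫ y in Ioo (0:ℝ) L₂, R x y ^ 2 := fun x =>
      Real.sq_sqrt (integral_nonneg fun y => sq_nonneg _)
    simp only [e1, e2] at m2
    have epull : (∫ x in Ioo (0:ℝ) L₁, ∫ y in Ioo (0:ℝ) L₂, 2 * (P x y * R x y))
        = 2 * ∫ x in Ioo (0:ℝ) L₁, ∫ y in Ioo (0:ℝ) L₂, P x y * R x y := by
      rw [← integral_const_mul]
      refine setIntegral_congr_fun measurableSet_Ioo fun x _ => ?_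
      rw [← integral_const_mul]
    rw [epull]
    have := m1.trans m2
    linarith
  -- apply core to f and h
  have coref := core hL₁ hL₂ hf
  have coreh := core hL₁ hL₂ hh
  have ePf : (∫ x in Ioo (0:ℝ) L₁, ∫ y in Ioo (0:ℝ) L₂,
      (∫ z in Ioo (-1:ℝ) 1, f x y z ^ 2) ^ 2)
      = ∫ x in Ioo (0:ℝ) L₁, ∫ y in Ioo (0:ℝ) L₂, P x y ^ 2 := by rw [hPdef]
  have ePh : (∫ x in Ioo (0:ℝ) L₁, ∫ y in Ioo (0:ℝ) L₂,
      (∫ z in Ioo (-1:ℝ) 1, h x y z ^ 2) ^ 2)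
      = ∫ x in Ioo (0:ℝ) L₁, ∫ y in Ioo (0:ℝ) L₂, R x y ^ 2 := by rw [hRdef]
  rw [ePf] at coref
  rw [ePh] at coreh
  -- name all scalar quantities
  set If : ℝ := ∫ x in Ioo (0:ℝ) L₁, ∫ y in Ioo (0:ℝ) L₂, ∫ z in Ioo (-1:ℝ) 1,
    f x y z ^ 2 with hIf
  set IfX : ℝ := ∫ x in Ioo (0:ℝ) L₁, ∫ y in Ioo (0:ℝ) L₂, ∫ z in Ioo (-1:ℝ) 1,
    dX f x y z ^ 2 with hIfX
  set IfY : ℝ := ∫ x in Ioo (0:ℝ) L₁, ∫ y in Ioo (0:ℝ) L₂, ∫ z in Ioo (-1:ℝ) 1,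
    dY f x y z ^ 2 with hIfY
  set Ih : ℝ := ∫ x in Ioo (0:ℝ) L₁, ∫ y in Ioo (0:ℝ) L₂, ∫ z in Ioo (-1:ℝ) 1,
    h x y z ^ 2 with hIh
  set IhX : ℝ := ∫ x in Ioo (0:ℝ) L₁, ∫ y in Ioo (0:ℝ) L₂, ∫ z in Ioo (-1:ℝ) 1,
    dX h x y z ^ 2 with hIhX
  set IhY : ℝ := ∫ x in Ioo (0:ℝ) L₁, ∫ y in Ioo (0:ℝ) L₂, ∫ z in Ioo (-1:ℝ) 1,
    dY h x y z ^ 2 with hIhY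
  set QQ : ℝ := ∫ x in Ioo (0:ℝ) L₁, ∫ y in Ioo (0:ℝ) L₂, Q x y with hQQ
  set PP : ℝ := ∫ x in Ioo (0:ℝ) L₁, ∫ y in Ioo (0:ℝ) L₂, P x y ^ 2 with hPP
  set RR : ℝ := ∫ x in Ioo (0:ℝ) L₁, ∫ y in Ioo (0:ℝ) L₂, R x y ^ 2 with hRR
  -- nonnegativity
  have tripnn : ∀ w : ℝ → ℝ → ℝ → ℝ, 0 ≤ ∫ x in Ioo (0:ℝ) L₁, ∫ y in Ioo (0:ℝ) L₂,
      ∫ z in Ioo (-1:ℝ) 1, w x y z ^ 2 := fun w =>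
    integral_nonneg fun x => integral_nonneg fun y => integral_nonneg fun z => sq_nonneg _
  have Ifnn : 0 ≤ If := tripnn f
  have IfXnn : 0 ≤ IfX := tripnn (dX f)
  have IfYnn : 0 ≤ IfY := tripnn (dY f)
  have Ihnn : 0 ≤ Ih := tripnn h
  have IhXnn : 0 ≤ IhX := tripnn (dX h)
  have IhYnn : 0 ≤ IhY := tripnn (dY h)
  have QQnn : 0 ≤ QQ := integral_nonneg fun x => integral_nonneg fun y => Qnn x y
  -- unfold the L2SqR goal and fold into the named quantities
  have eL2 : ∀ w : ℝ → ℝ → ℝ → ℝ, L2Sq L₁ L₂ w = ∫ x in Ioo (0:ℝ) L₁,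
      ∫ y in Ioo (0:ℝ) L₂, ∫ z in Ioo (-1:ℝ) 1, w x y z ^ 2 := fun w => by
    simp only [L2Sq, intΩ, Real.norm_eq_abs, sq_abs]
  have eQ : QQ = L2Sq L₁ L₂ g := by rw [hQQ, hQdef, eL2 g]
  have eIf : If = L2Sq L₁ L₂ f := by rw [hIf, eL2 f]
  have eIh : Ih = L2Sq L₁ L₂ h := by rw [hIh, eL2 h]
  have eIfX : IfX = L2Sq L₁ L₂ (dX f) := by rw [hIfX, eL2 (dX f)]
  have eIfY : IfY = L2Sq L₁ L₂ (dY f) := by rw [hIfY, eL2 (dY f)]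
  have eIhX : IhX = L2Sq L₁ L₂ (dX h) := by rw [hIhX, eL2 (dX h)]
  have eIhY : IhY = L2Sq L₁ L₂ (dY h) := by rw [hIhY, eL2 (dY h)]
  rw [show GradHL2Sq L₁ L₂ f = L2Sq L₁ L₂ (dX f) + L2Sq L₁ L₂ (dY f) from rfl,
    show GradHL2Sq L₁ L₂ h = L2Sq L₁ L₂ (dX h) + L2Sq L₁ L₂ (dY h) from rfl,
    ← eQ, ← eIf, ← eIh, ← eIfX, ← eIfY, ← eIhX, ← eIhY]
  have hK1 : 1 / L₁ ≤ K := by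
    rw [hK]
    have h2 : 0 < 1 / L₂ := by positivity
    linarith
  have hK2 : 1 / L₂ ≤ K := by
    rw [hK]
    have h1 : 0 < 1 / L₁ := by positivity
    linarith
  have h2K : (2:ℝ) ≤ K := by
    rw [hK]
    have h1 : 0 < 1 / L₁ := by positivity
    have h2 : 0 < 1 / L₂ := by positivity
    linarith
  have hk1 : (0:ℝ) ≤ 1 / L₁ := by positivity
  have hk2 : (0:ℝ) ≤ 1 / L₂ := by positivity
  exact finarith hk1 hk2 hK1 hK2 h2K step3 step4 coref coreh Ifnn IfXnn IfYnn Ihnn IhXnn IhYnn QQnn
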